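/- Let G be an oriented derived graph with an arc uv such that the out-neighborhood of u is exactly {v} and the in-neighborhood of v is exactly {u}. Then the oriented graph G' obtained by contracting the arc uv is also a derived graph. -/
import Mathlib


/-- An oriented graph on vertex type `V`: an irreflexive, asymmetric arc relation. -/
structure OrientedGraph (V : Type) where
  arc : V → V → Prop
  irrefl : ∀ v, ¬ arc v v
  asymm : ∀ u v, arc u v → ¬ arc v u

/-- A Burling tree `(T, root, lastBorn, choose)`.  The tree is encoded by its parent
function (with `parent root = root`); `lastBorn v` is a distinguished child of each
non-leaf `v`; `choose v` is the vertex set of a (possibly empty) branch of the tree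
starting at the last-born of the parent of `v` when `v` is neither the root nor a
last-born, and is empty otherwise. -/
structure BurlingTree (V : Type) where
  root : V
  parent : V → V
  parent_root : parent root = root
  reaches_root : ∀ v, ∃ n, parent^[n] v = root
  lastBorn : V → V
  lastBorn_child : ∀ v w, w ≠ root → parent w = v →
    lastBorn v ≠ root ∧ parent (lastBorn v) = v
  choose : V → Set V
  choose_root : choose root = ∅
  choose_lastBorn : ∀ v, v ≠ root → lastBorn (parent v) = v → choose v = ∅
  choose_branch : ∀ v, v ≠ root → lastBorn (parent v) ≠ v →
    choose v = ∅ ∨ ∃ b, (∃ n, parent^[n] b = lastBorn (parent v)) ∧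
      choose v = {x | (∃ n, parent^[n] x = lastBorn (parent v)) ∧ ∃ n, parent^[n] b = x}

namespace BurlingTree

variable {V : Type} (T : BurlingTree V)

/-- `u` is an ancestor of `v` in `T` (possibly `u = v`). -/
def Anc (u v : V) : Prop := ∃ n, T.parent^[n] v = u

/-- Arc relation of the oriented graph derived from `T` with vertex set `S`
(the induced subgraph, on `S`, of the graph fully derived from `T`). -/
def Arc (S : Set V) (u v : V) : Prop := u ∈ S ∧ v ∈ S ∧ v ∈ T.choose u

/-- Underlying undirected graph of the derived graph on `S`. -/
def UGraph (S : Set V) : SimpleGraph V := SimpleGraph.fromRel (T.Arc S)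

/-- Closed in-neighborhood `N⁻[v]` in the derived graph on `S`. -/
def InNbhd (S : Set V) (v : V) : Set V := insert v {u | T.Arc S u v}

/-- The top-set of the derived graph on `S`: vertices of `S` that are the unique
vertex of `S` on the branch of `T` from the root to them. -/
def TopSet (S : Set V) : Set V := {v | v ∈ S ∧ ∀ x ∈ S, T.Anc x v → x = v}

end BurlingTree

/-- Reachability between `u` and `w` inside the set `A` of vertices of `G`. -/
def ReachIn {V : Type} (G : SimpleGraph V) (A : Set V) (u w : V) : Prop :=
  Relation.ReflTransGen (fun x y => x ∈ A ∧ y ∈ A ∧ G.Adj x y) u w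

/-- `N⁻[v]` is a full in-star cutset of the graph derived from `T` on `S`. -/
def BurlingTree.IsFullInStarCutset {V : Type} (T : BurlingTree V) (S : Set V) (v : V) : Prop :=
  ∃ a ∈ S \ T.InNbhd S v, ∃ b ∈ S \ T.InNbhd S v,
    ¬ ReachIn (T.UGraph S) (S \ T.InNbhd S v) a b

/-- The arc relation `A` is an in-forest: a disjoint union of orientations of rooted
trees with all edges oriented towards the root.  Equivalently: it is irreflexive and
asymmetric, its underlying graph is a forest, every vertex has at most one
out-neighbor, and from every vertex the unique outgoing directed path terminates in
a sink. -/
def IsInForestRel {V : Type} (A : V → V → Prop) : Prop :=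
  (∀ v, ¬ A v v) ∧ (∀ u v, A u v → ¬ A v u) ∧
  (SimpleGraph.fromRel A).IsAcyclic ∧
  (∀ u v w, A u v → A u w → v = w) ∧
  (∀ v, ∃ r, Relation.ReflTransGen A v r ∧ ∀ w, ¬ A r w)

/-- The arc relation `A` forms an in-tree on the vertex set `U`:
an in-forest all of whose vertices in `U` reach a common root. -/
def IsInTreeOn {V : Type} (A : V → V → Prop) (U : Set V) : Prop :=
  IsInForestRel A ∧ ∃ r ∈ U, ∀ v ∈ U, Relation.ReflTransGen A v r

/-- The graph with arc relation `A` and vertex set `U` is an oriented chandelier: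
it is obtained from an in-tree `G'` (on `U` minus an apex `v`) with at least two
leaves by adding the vertex `v` and exactly the arcs from each leaf of `G'` to `v`.
A leaf of the in-tree is a source having exactly one out-neighbor. -/
def ChandelierOn {V : Type} (A : V → V → Prop) (U : Set V) : Prop :=
  ∃ v ∈ U,
    IsInTreeOn (fun a b => A a b ∧ a ≠ v ∧ b ≠ v) (U \ {v}) ∧
    (∀ u, ¬ A v u) ∧
    (∀ u, A u v ↔ (u ∈ U ∧ u ≠ v ∧ (∀ w, ¬ (A w u ∧ w ≠ v ∧ u ≠ v)) ∧
       ∃ w, A u w ∧ w ≠ v ∧ u ≠ v)) ∧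
    (∃ u₁ u₂, u₁ ≠ u₂ ∧ A u₁ v ∧ A u₂ v)

namespace OrientedGraph

variable {V : Type} (G : OrientedGraph V)

/-- Underlying undirected simple graph of an oriented graph. -/
def toSimpleGraph : SimpleGraph V := SimpleGraph.fromRel G.arc

/-- `G` is an in-forest. -/
def IsInForest : Prop := IsInForestRel G.arc

/-- `G` is an oriented chandelier. -/
def IsChandelier : Prop := ChandelierOn G.arc Set.univ

/-- Closed in-neighborhood `N⁻[v]`. -/
def InNbhd (v : V) : Set V := insert v {u | G.arc u v}

/-- `G` has a full in-star cutset: for some vertex `v`, removing `N⁻[v]`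
disconnects the underlying graph. -/
def HasFullInStarCutset : Prop :=
  ∃ v, ∃ a ∈ (G.InNbhd v)ᶜ, ∃ b ∈ (G.InNbhd v)ᶜ,
    ¬ ReachIn G.toSimpleGraph (G.InNbhd v)ᶜ a b

/-- `v` is a cut vertex of `G`: some two vertices distinct from `v` are connected
in the underlying graph but disconnected after removing `v`. -/
def IsCutVertex (v : V) : Prop :=
  ∃ a b, a ≠ v ∧ b ≠ v ∧ G.toSimpleGraph.Reachable a b ∧
    ¬ ReachIn G.toSimpleGraph {v}ᶜ a b

/-- `G` is a `k`-Burling oriented graph: it is isomorphic to a graph derived from a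
Burling tree `T` such that every branch of `T` contains at most `k` vertices of `G`. -/
def IsKBurling (k : ℕ) : Prop :=
  ∃ (W : Type) (T : BurlingTree W) (f : V → W),
    Function.Injective f ∧
    (∀ u v, G.arc u v ↔ T.Arc (Set.range f) (f u) (f v)) ∧
    ∀ b : W, ({x | x ∈ Set.range f ∧ T.Anc x b}).ncard ≤ k

end OrientedGraph

/-- The graph with arc relation `A` on vertex set `U` is (isomorphic to) a graph
derived from some Burling tree. -/
def IsDerivedOn {V : Type} (A : V → V → Prop) (U : Set V) : Prop :=
  ∃ (W : Type) (T : BurlingTree W) (f : V → W),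
    Set.InjOn f U ∧ ∀ a ∈ U, ∀ b ∈ U, (A a b ↔ f b ∈ T.choose (f a))

/-- `C` is a hole of the graph derived from `T` on `S`: an induced cycle of length
at least 4 of the underlying graph (a finite set of at least four vertices whose
induced subgraph is connected and 2-regular). -/
def BurlingTree.IsHole {V : Type} (T : BurlingTree V) (S : Set V) (C : Set V) : Prop :=
  C ⊆ S ∧ C.Finite ∧ 4 ≤ C.ncard ∧
  (∀ x ∈ C, ({y | y ∈ C ∧ (T.UGraph S).Adj x y}).ncard = 2) ∧
  (∀ x ∈ C, ∀ y ∈ C, ReachIn (T.UGraph S) C x y)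

/-- `p` is the pivot of the hole `C`: a sink of the hole both of whose neighbors in
the hole are sources of the hole (the antennas). -/
def BurlingTree.IsPivotOf {V : Type} (T : BurlingTree V) (S : Set V) (C : Set V) (p : V) : Prop :=
  p ∈ C ∧ (∀ w ∈ C, ¬ T.Arc S p w) ∧
  (∀ q ∈ C, (T.UGraph S).Adj p q → ∀ w ∈ C, ¬ T.Arc S w q)

namespace BurlingTree

variable {Vt : Type} (T : BurlingTree Vt)

lemma iterate_root (n : ℕ) : T.parent^[n] T.root = T.root :=
  Function.iterate_fixed T.parent_root n

lemma eq_root_of_iterate {n : ℕ} {w : Vt} (hn : n ≠ 0) (h : T.parent^[n] w = w) :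
    w = T.root := by
  obtain ⟨N, hN⟩ := T.reaches_root w
  have key : ∀ t, T.parent^[n * t] w = w := by
    intro t
    induction t with
    | zero => simp
    | succ t ih =>
      have he : n * (t + 1) = n + n * t := by ring
      rw [he, Function.iterate_add_apply, ih, h]
  have h1 : N ≤ n * N := Nat.le_mul_of_pos_left N (Nat.pos_of_ne_zero hn)
  have h2 : T.parent^[n * N] w = w := key N
  rw [show n * N = (n * N - N) + N by omega, Function.iterate_add_apply, hN,
    T.iterate_root] at h2
  exact h2.symm

end BurlingTree

/-- If `G` is a derived oriented graph with an arc `uv` such that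
`N⁺(u) = {v}` and `N⁻(v) = {u}`, then the graph obtained by contracting the arc
`uv` is also a derived graph. -/

theorem stmt15 (V : Type) (T : BurlingTree V) (S : Set V) (u v : V)
    (huv : T.Arc S u v)
    (hout : ∀ w, T.Arc S u w ↔ w = v)
    (hin : ∀ w, T.Arc S w v ↔ w = u) :
    IsDerivedOn (fun a b => T.Arc S a b ∨ (a = u ∧ T.Arc S v b)) (S \ {v}) := by
  classical
  obtain ⟨huS, hvS, hvcu⟩ := huv
  -- basic facts about u
  have hu_root : u ≠ T.root := by
    intro h; rw [h, T.choose_root] at hvcu; exact hvcu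
  have hLu_ne : T.lastBorn (T.parent u) ≠ u := by
    intro h
    rw [T.choose_lastBorn u hu_root h] at hvcu; exact hvcu
  obtain ⟨hLu_root, hPLu⟩ := T.lastBorn_child (T.parent u) u hu_root rfl
  have hbranch := (T.choose_branch u hu_root hLu_ne).resolve_left (by
    intro h; rw [h] at hvcu; exact hvcu)
  obtain ⟨bu, ⟨nbu, hnbu⟩, hcu⟩ := hbranch
  rw [hcu] at hvcu
  obtain ⟨⟨nv, hnv⟩, mv, hmv⟩ := hvcu
  have hv_root : v ≠ T.root := by
    intro h
    rw [h, T.iterate_root] at hnv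
    exact hLu_root hnv.symm
  obtain ⟨hLv_root, hPLv⟩ := T.lastBorn_child (T.parent v) v hv_root rfl
  have hLv_ne_u : T.lastBorn (T.parent v) ≠ u := by
    intro h
    apply hLu_ne
    have hpu : T.parent u = T.parent v := by rw [← h, hPLv]
    rw [hpu, h]
  -- K1 : parent u is an ancestor of parent v
  have hK1 : T.parent^[nv] (T.parent v) = T.parent u := by
    have h1 : T.parent^[nv + 1] v = T.parent (T.lastBorn (T.parent u)) := by
      rw [Function.iterate_succ_apply', hnv]
    rw [hPLu, Function.iterate_succ_apply] at h1
    exact h1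
  have iter_sub : ∀ (f : V → V) (m n : ℕ) (y : V), m ≤ n →
      f^[n] y = f^[n - m] (f^[m] y) := by
    intro f m n y h
    conv_lhs => rw [show n = (n - m) + m by omega]
    rw [Function.iterate_add_apply]
  -- K2 : u is not an ancestor of parent v
  have hK2 : ∀ n, T.parent^[n] (T.parent v) ≠ u := by
    intro n hn
    have hn' : T.parent^[n + 1] v = u := by
      rw [Function.iterate_succ_apply]; exact hn
    rcases le_or_gt (n + 1) nv with h | h
    · have h1 : T.parent^[nv - (n + 1)] u = T.lastBorn (T.parent u) := by
        conv_lhs => rw [← hn']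
        rw [← Function.iterate_add_apply,
          show nv - (n + 1) + (n + 1) = nv by omega]
        exact hnv
      rcases Nat.eq_zero_or_pos (nv - (n + 1)) with h0 | h0
      · rw [h0] at h1
        exact hLu_ne h1.symm
      · have h2 : T.parent^[nv - (n + 1)] (T.parent u) = T.parent u := by
          have h3 := congrArg T.parent h1
          rw [hPLu, ← Function.iterate_succ_apply' T.parent (nv - (n + 1)) u,
            Function.iterate_succ_apply] at h3
          exact h3
        have h3 : T.parent u = T.root := T.eq_root_of_iterate (by omega) h2
        apply hLu_root
        rw [← h1, iter_sub T.parent 1 (nv - (n + 1)) u h0, Function.iterate_one, h3,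
          T.iterate_root]
    · have h1 : T.parent^[(n + 1) - nv] (T.lastBorn (T.parent u)) = u := by
        rw [← hnv, ← Function.iterate_add_apply,
          show (n + 1) - nv + nv = n + 1 by omega]
        exact hn'
      have h2 : T.parent^[(n + 1) - nv] u = u := by
        rw [iter_sub T.parent 1 ((n + 1) - nv) _ (by omega), Function.iterate_one,
          hPLu, ← Function.iterate_succ_apply,
          show (n + 1 - nv - 1).succ = n + 1 - nv by omega] at h1
        exact h1
      exact hu_root (T.eq_root_of_iterate (by omega) h2)
  -- the new parent function
  set Q : V → V := fun x => if x = u then T.parent v else T.parent x with hQdef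
  have hQu : Q u = T.parent v := by simp [hQdef]
  have hQne : ∀ x, x ≠ u → Q x = T.parent x := by
    intro x hx; simp [hQdef, hx]
  have hG : ∀ (n : ℕ) (y : V), (∀ k, k < n → T.parent^[k] y ≠ u) →
      Q^[n] y = T.parent^[n] y := by
    intro n
    induction n with
    | zero => intro y _; rfl
    | succ n ih =>
      intro y hy
      rw [Function.iterate_succ_apply', Function.iterate_succ_apply',
        ih y (fun k hk => hy k (by omega)), hQne _ (hy n (by omega))]
  have hG' : ∀ (n : ℕ) (y : V), (∀ k, k < n → Q^[k] y ≠ u) →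
      Q^[n] y = T.parent^[n] y := by
    intro n
    induction n with
    | zero => intro y _; rfl
    | succ n ih =>
      intro y hy
      have h1 : Q^[n] y = T.parent^[n] y := ih y (fun k hk => hy k (by omega))
      have h2 : T.parent^[n] y ≠ u := by rw [← h1]; exact hy n (by omega)
      rw [Function.iterate_succ_apply', Function.iterate_succ_apply', h1, hQne _ h2]
  have hGPv : ∀ n, Q^[n] (T.parent v) = T.parent^[n] (T.parent v) :=
    fun n => hG n _ (fun k _ => hK2 k)
  -- ancestry transfers forward
  have hFWD : ∀ (x y : V), (∃ n, T.parent^[n] y = x) → ∃ n, Q^[n] y = x := by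
    intro x y h
    obtain ⟨n, rfl⟩ := h
    by_cases hc : ∃ k, k < n ∧ T.parent^[k] y = u
    · have hex : ∃ k, T.parent^[k] y = u := ⟨hc.choose, hc.choose_spec.2⟩
      have hku : T.parent^[Nat.find hex] y = u := Nat.find_spec hex
      have hkmin : ∀ j, j < Nat.find hex → T.parent^[j] y ≠ u :=
        fun j hj => Nat.find_min hex hj
      have hkn : Nat.find hex < n :=
        lt_of_le_of_lt (Nat.find_min' hex hc.choose_spec.2) hc.choose_spec.1
      set k := Nat.find hex with hkdef
      have hQk : Q^[k] y = u := by rw [hG k y hkmin]; exact hku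
      have hQk1 : Q^[k + 1] y = T.parent v := by
        rw [Function.iterate_succ_apply', hQk, hQu]
      have hx1 : T.parent^[n] y = T.parent^[n - k] u := by
        rw [iter_sub T.parent k n y (le_of_lt hkn), hku]
      have hx2 : T.parent^[n - k] u = T.parent^[(n - k - 1) + nv] (T.parent v) := by
        rw [Function.iterate_add_apply, hK1,
          iter_sub T.parent 1 (n - k) u (by omega), Function.iterate_one]
      refine ⟨((n - k - 1) + nv) + (k + 1), ?_⟩
      rw [Function.iterate_add_apply, hQk1, hGPv, hx1, hx2]
    · push_neg at hc
      exact ⟨n, hG n y hc⟩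
  -- ancestry transfers backward
  have hBWD : ∀ (x y : V), (∃ n, Q^[n] y = x) →
      (∃ n, T.parent^[n] y = x) ∨
      ((∃ n, T.parent^[n] y = u) ∧ ∃ n, T.parent^[n] (T.parent v) = x) := by
    intro x y h
    obtain ⟨n, rfl⟩ := h
    by_cases hc : ∃ k, k < n ∧ Q^[k] y = u
    · have hex : ∃ k, Q^[k] y = u := ⟨hc.choose, hc.choose_spec.2⟩
      have hku : Q^[Nat.find hex] y = u := Nat.find_spec hex
      have hkmin : ∀ j, j < Nat.find hex → Q^[j] y ≠ u :=
        fun j hj => Nat.find_min hex hj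
      have hkn : Nat.find hex < n :=
        lt_of_le_of_lt (Nat.find_min' hex hc.choose_spec.2) hc.choose_spec.1
      set k := Nat.find hex with hkdef
      have hPk : T.parent^[k] y = u := by rw [← hG' k y hkmin]; exact hku
      right
      refine ⟨⟨k, hPk⟩, ⟨n - (k + 1), ?_⟩⟩
      have h1 : Q^[k + 1] y = T.parent v := by
        rw [Function.iterate_succ_apply', hku, hQu]
      have h2 : Q^[n] y = Q^[n - (k + 1)] (Q^[k + 1] y) := iter_sub Q (k + 1) n y (by omega)
      rw [h1, hGPv] at h2
      exact h2.symm
    · push_neg at hc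
      left
      exact ⟨n, (hG' n y hc).symm⟩
  have hTrans : ∀ (x y z : V), (∃ n, T.parent^[n] y = x) → (∃ n, T.parent^[n] z = y) →
      ∃ n, T.parent^[n] z = x := by
    intro x y z h1 h2
    obtain ⟨n, rfl⟩ := h1
    obtain ⟨m, rfl⟩ := h2
    exact ⟨n + m, Function.iterate_add_apply _ n m z⟩
  -- strict ancestors of parent v which are in S \ {v} are strict ancestors of u
  have hAncPv : ∀ b, b ∈ S → b ≠ v → (∃ k, T.parent^[k] (T.parent v) = b) →
      ∃ j, T.parent^[j] u = b := by
    intro b hbS hbv h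
    obtain ⟨k, hk⟩ := h
    rcases lt_or_ge k nv with h | h
    · exfalso
      have hb1 : T.parent^[k + 1] v = b := by
        rw [Function.iterate_succ_apply]; exact hk
      have hanc : T.parent^[nv - (k + 1)] b = T.lastBorn (T.parent u) := by
        rw [← hb1, ← Function.iterate_add_apply,
          show nv - (k + 1) + (k + 1) = nv by omega]
        exact hnv
      have hdesc : T.parent^[(k + 1) + mv] bu = b := by
        rw [Function.iterate_add_apply, hmv, hb1]
      have hbc : b ∈ T.choose u := by
        rw [hcu]; exact ⟨⟨_, hanc⟩, ⟨_, hdesc⟩⟩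
      exact hbv ((hout b).mp ⟨huS, hbS, hbc⟩)
    · refine ⟨k - nv + 1, ?_⟩
      rw [Function.iterate_succ_apply, ← hK1, ← Function.iterate_add_apply,
        show k - nv + nv = k by omega]
      exact hk
  have hK2' : ∀ (w : V), (∃ n, T.parent^[n] (T.parent v) = w) →
      (∃ n, T.parent^[n] w = u) → False := by
    intro w h1 h2
    obtain ⟨n, rfl⟩ := h1
    obtain ⟨m, hm⟩ := h2
    exact hK2 (m + n) (by rw [Function.iterate_add_apply]; exact hm)
  -- extraction of branch data
  have hNE : ∀ a, (T.choose a).Nonempty → a ≠ T.root := by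
    intro a h ha
    rw [ha, T.choose_root] at h
    exact Set.not_nonempty_empty h
  have hNE2 : ∀ a, (T.choose a).Nonempty → T.lastBorn (T.parent a) ≠ a := by
    intro a h ha
    rw [T.choose_lastBorn a (hNE a h) ha] at h
    exact Set.not_nonempty_empty h
  have hBr : ∀ a, (T.choose a).Nonempty → ∃ b,
      (∃ n, T.parent^[n] b = T.lastBorn (T.parent a)) ∧
      T.choose a = {x | (∃ n, T.parent^[n] x = T.lastBorn (T.parent a)) ∧
        ∃ n, T.parent^[n] b = x} := by
    intro a h
    refine (T.choose_branch a (hNE a h) (hNE2 a h)).resolve_left ?_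
    intro he
    rw [he] at h
    exact Set.not_nonempty_empty h
  -- the new choose function
  set ch : V → Set V := fun a =>
    if a = u then T.choose v
    else if h : (T.choose a).Nonempty then
      {x | (∃ n, Q^[n] x = T.lastBorn (T.parent a)) ∧
        ∃ n, Q^[n] (Classical.choose (hBr a h)) = x}
    else ∅ with hchdef
  have hchu : ch u = T.choose v := by simp [hchdef]
  have hchne : ∀ a, a ≠ u → ¬ (T.choose a).Nonempty → ch a = ∅ := by
    intro a ha h; simp [hchdef, ha, h]
  have hchpos : ∀ a (ha : a ≠ u) (h : (T.choose a).Nonempty),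
      ch a = {x | (∃ n, Q^[n] x = T.lastBorn (T.parent a)) ∧
        ∃ n, Q^[n] (Classical.choose (hBr a h)) = x} := by
    intro a ha h
    simp only [hchdef]
    rw [if_neg ha, dif_pos h]
  -- v's lastBorn is not an ancestor of parent v
  have hLvPv : (∃ n, T.parent^[n] (T.parent v) = T.lastBorn (T.parent v)) → False := by
    intro h
    obtain ⟨m, hm⟩ := h
    apply hLv_root
    apply T.eq_root_of_iterate (n := m + 1) (by omega)
    rw [Function.iterate_succ_apply, hPLv]
    exact hm
  refine ⟨V, ⟨T.root, Q, ?_, ?_, T.lastBorn, ?_, ch, ?_, ?_, ?_⟩, id,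
    fun x _ y _ h => h, ?_⟩
  · -- parent_root
    rw [hQne T.root (fun h => hu_root h.symm), T.parent_root]
  · -- reaches_root
    intro w
    obtain ⟨N, hN⟩ := T.reaches_root w
    induction N generalizing w with
    | zero => exact ⟨0, hN⟩
    | succ N ih =>
      by_cases hw : w = u
      · obtain ⟨M, hM⟩ := T.reaches_root (T.parent v)
        refine ⟨M + 1, ?_⟩
        rw [Function.iterate_succ_apply, hw, hQu, hGPv]
        exact hM
      · obtain ⟨m, hm⟩ := ih (T.parent w)
          (by rw [← Function.iterate_succ_apply]; exact hN)
        refine ⟨m + 1, ?_⟩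
        rw [Function.iterate_succ_apply, hQne w hw]
        exact hm
  · -- lastBorn_child
    intro x w hw hPw
    by_cases hwu : w = u
    · subst hwu
      rw [hQu] at hPw
      subst hPw
      exact ⟨hLv_root, by rw [hQne _ hLv_ne_u, hPLv]⟩
    · rw [hQne w hwu] at hPw
      obtain ⟨h1, h2⟩ := T.lastBorn_child x w hw hPw
      refine ⟨h1, ?_⟩
      have hxu : T.lastBorn x ≠ u := by
        intro h
        apply hLu_ne
        have h3 : T.parent u = x := by rw [← h]; exact h2
        rw [h3]
        exact h
      rw [hQne _ hxu]
      exact h2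
  · -- choose_root
    rw [hchne T.root (fun h => hu_root h.symm)
      (by rw [T.choose_root]; exact Set.not_nonempty_empty)]
  · -- choose_lastBorn
    intro a ha hla
    by_cases hau : a = u
    · exfalso
      subst hau
      rw [hQu] at hla
      exact hLv_ne_u hla
    · rw [hQne a hau] at hla
      exact hchne a hau (fun h => hNE2 a h hla)
  · -- choose_branch
    intro a ha hla
    by_cases hau : a = u
    · subst hau
      by_cases hcv : (T.choose v).Nonempty
      · right
        obtain ⟨hb0anc, hcveq⟩ := Classical.choose_spec (hBr v hcv)
        set b0 := Classical.choose (hBr v hcv) with hb0def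
        refine ⟨b0, ?_, ?_⟩
        · rw [hQu]
          exact hFWD _ _ hb0anc
        · rw [hchu, hQu]
          ext x
          simp only [Set.mem_setOf_eq]
          constructor
          · intro hx
            rw [hcveq] at hx
            exact ⟨hFWD _ _ hx.1, hFWD _ _ hx.2⟩
          · rintro ⟨h1, h2⟩
            rw [hcveq]
            have h1' : ∃ n, T.parent^[n] x = T.lastBorn (T.parent v) := by
              rcases hBWD _ _ h1 with h | ⟨-, hPvLv⟩
              · exact h
              · exact (hLvPv hPvLv).elim
            have h2' : ∃ n, T.parent^[n] b0 = x := by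
              rcases hBWD _ _ h2 with h | ⟨-, hxPv⟩
              · exact h
              · exact (hLvPv (hTrans _ _ _ h1' hxPv)).elim
            exact ⟨h1', h2'⟩
      · left
        rw [hchu]
        exact Set.not_nonempty_iff_eq_empty.mp hcv
    · by_cases hca : (T.choose a).Nonempty
      · right
        refine ⟨Classical.choose (hBr a hca), ?_, ?_⟩
        · rw [hQne a hau]
          exact hFWD _ _ (Classical.choose_spec (hBr a hca)).1
        · rw [hchpos a hau hca, hQne a hau]
      · left
        exact hchne a hau hca
  · -- the main equivalence
    intro a ha b hb
    obtain ⟨haS, hav⟩ := ha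
    obtain ⟨hbS, hbv⟩ := hb
    rw [Set.mem_singleton_iff] at hav hbv
    simp only [id_eq]
    by_cases hau : a = u
    · subst hau
      rw [hchu]
      constructor
      · rintro (harc | ⟨-, harc⟩)
        · exact absurd ((hout b).mp harc) hbv
        · exact harc.2.2
      · intro h
        exact Or.inr ⟨rfl, hvS, hbS, h⟩
    · by_cases hca : (T.choose a).Nonempty
      · rw [hchpos a hau hca]
        obtain ⟨hbaanc, hcaeq⟩ := Classical.choose_spec (hBr a hca)
        set b_a := Classical.choose (hBr a hca) with hbadef
        simp only [Set.mem_setOf_eq]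
        constructor
        · rintro (⟨-, -, hbc⟩ | ⟨hc, -⟩)
          · rw [hcaeq] at hbc
            exact ⟨hFWD _ _ hbc.1, hFWD _ _ hbc.2⟩
          · exact absurd hc hau
        · rintro ⟨h1, h2⟩
          refine Or.inl ⟨haS, hbS, ?_⟩
          rw [hcaeq]
          have D2 : ∃ n, T.parent^[n] b_a = b := by
            rcases hBWD _ _ h2 with h | ⟨hub_a, hbPv⟩
            · exact h
            · exact hTrans _ _ _ (hAncPv b hbS hbv hbPv) hub_a
          rcases hBWD _ _ h1 with hLab | ⟨hub, hLaPv⟩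
          · exact ⟨hLab, D2⟩
          · obtain ⟨s, hs⟩ := hTrans _ _ _ hub D2
            obtain ⟨t, ht⟩ := hbaanc
            rcases le_or_gt s t with hst | hst
            · have hLa : T.parent^[t - s] u = T.lastBorn (T.parent a) := by
                rw [← hs, ← Function.iterate_add_apply,
                  show t - s + s = t by omega]
                exact ht
              exact ⟨hTrans _ _ _ ⟨t - s, hLa⟩ hub, D2⟩
            · exfalso
              apply hK2' _ hLaPv
              refine ⟨s - t, ?_⟩
              rw [← ht, ← Function.iterate_add_apply, show s - t + t = s by omega]
              exact hs
      · rw [hchne a hau hca]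
        simp only [Set.mem_empty_iff_false, iff_false]
        rintro (⟨-, -, hbc⟩ | ⟨hc, -⟩)
        · exact hca ⟨b, hbc⟩
        · exact hau hc
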